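/- arXiv:2210.12711 — 8 statements merged into one kernel-verified Lean document; each statement's English description precedes it below -/
import Mathlib

section
/- For α ≥ 1 and real β, the maximal quantum bound √((4 + β²)(1 + α²)) of the generalized tilted-CHSH inequality is strictly greater than the classical bound 2α + β whenever β < 2/α, and they are equal when β = 2/α. -/
/-! By the two-term Lagrange identity, `(4 + β²)(1 + α²) = (2α + β)² + (αβ - 2)²`, so the
quantum bound exceeds the classical one whenever `αβ ≠ 2`, and equals it when `αβ = 2`
(where `2α + β ≥ 0`). -/

theorem tiltedCHSH_bound_sq_eq (α β : ℝ) :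
    (4 + β ^ 2) * (1 + α ^ 2) = (2 * α + β) ^ 2 + (α * β - 2) ^ 2 := by
  ring

theorem Real.lt_sqrt_sq_add_sq (x : ℝ) {y : ℝ} (hy : y ≠ 0) : x < √(x ^ 2 + y ^ 2) :=
  calc x ≤ |x| := le_abs_self x
    _ = √(x ^ 2) := (Real.sqrt_sq_eq_abs x).symm
    _ < √(x ^ 2 + y ^ 2) :=
      Real.sqrt_lt_sqrt (sq_nonneg x) (lt_add_of_pos_right _ (by positivity))

theorem stmt_1 (α β : ℝ) (hα : 1 ≤ α) :
    (β < 2 / α → 2 * α + β < Real.sqrt ((4 + β ^ 2) * (1 + α ^ 2))) ∧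
    (β = 2 / α → Real.sqrt ((4 + β ^ 2) * (1 + α ^ 2)) = 2 * α + β) := by
  have hα₀ : 0 < α := zero_lt_one.trans_le hα
  rw [tiltedCHSH_bound_sq_eq]
  constructor
  · intro hβ
    have hαβ : α * β < 2 := (lt_div_iff₀' hα₀).mp hβ
    exact Real.lt_sqrt_sq_add_sq _ (sub_ne_zero.mpr hαβ.ne)
  · rintro rfl
    rw [mul_div_cancel₀ _ hα₀.ne', sub_self, zero_pow two_ne_zero, add_zero,
      Real.sqrt_sq (by positivity)]
end

section
/- Let A₀, A₁, B₀, B₁ be self-adjoint operators on a Hilbert space with A₀² = A₁² = B₀² = B₁² = 1 and [Aₓ, B_y] = 0 for all x, y ∈ {0,1}. For β = 0 and α ≥ 1, the operator η·1 − B_{[α,0]}, where B_{[α,0]} = α(A₀B₀ + A₀B₁) + A₁B₀ − A₁B₁ and η = 2√(1 + α²), equals (1/(Δ + 2η))·[(η·1 − B_{[α,0]})² + α²·S₀² + (α² − 1)((η/(α²+1)·1 − A₁(B₀ − B₁))² + (−ηα/(α²+1)·A₀ + B₀ + B₁)²)], where S₀ = A₀(B₀ − B₁) + (1/α)A₁(B₀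 + B₁) and Δ = 2(α² − 1)·√(4/(α²+1)). In particular η·1 − B_{[α,0]} is positive semidefinite. -/
/-!
Put `p = b₀ + b₁` and `q = b₀ - b₁`. For involutions `b₀, b₁` one has `p² + q² = 4` and
`pq + qp = 0`, so `B = α a₀ p + a₁ q` and `α S₀ = α a₀ q + a₁ p` satisfy
`B² + (α S₀)² = (α² + 1)(p² + q²) = η²`: the cross terms cancel. The two remaining squares add up
to `8 - (2η / (α² + 1)) B`. Hence the weighted sum of the four squares is affine in `B`, and
`η² = 4(α² + 1)` makes it `(16α² / η)(η - B)`, where `16α² / η = Δ + 2η`. All weights are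
nonnegative for `α ≥ 1` and all squared operators are self-adjoint, which gives positivity.
-/

open ContinuousLinearMap

section Algebra

variable {K R : Type*} [CommRing K] [Ring R] [Algebra K R]

theorem add_sq_add_sub_sq_eq_four {b₀ b₁ : R} (hb₀ : b₀ * b₀ = 1) (hb₁ : b₁ * b₁ = 1) :
    (b₀ + b₁) ^ 2 + (b₀ - b₁) ^ 2 = 4 := by
  have : (b₀ + b₁) ^ 2 + (b₀ - b₁) ^ 2 = 2 * (b₀ * b₀ + b₁ * b₁) := by noncomm_ring
  rw [this, hb₀, hb₁]
  norm_num

theorem add_mul_sub_add_sub_mul_add_eq_zero {b₀ b₁ : R} (hb₀ : b₀ * b₀ = 1)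
    (hb₁ : b₁ * b₁ = 1) : (b₀ + b₁) * (b₀ - b₁) + (b₀ - b₁) * (b₀ + b₁) = 0 := by
  have : (b₀ + b₁) * (b₀ - b₁) + (b₀ - b₁) * (b₀ + b₁) = 2 * (b₀ * b₀ - b₁ * b₁) := by noncomm_ring
  rw [this, hb₀, hb₁, sub_self, mul_zero]

theorem sq_add_sq_of_anticommute {a₀ a₁ p q : R} (ha₀ : a₀ * a₀ = 1) (ha₁ : a₁ * a₁ = 1)
    (ha₀p : Commute a₀ p) (ha₀q : Commute a₀ q) (ha₁p : Commute a₁ p) (ha₁q : Commute a₁ q)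
    (hpq : p * q + q * p = 0) (α : K) :
    (α • (a₀ * p) + a₁ * q) ^ 2 + (α • (a₀ * q) + a₁ * p) ^ 2 = (α ^ 2 + 1) • (p ^ 2 + q ^ 2) := by
  have hqp : q * p = -(p * q) := eq_neg_of_add_eq_zero_right hpq
  simp only [sq, add_mul, mul_add, smul_mul_assoc, mul_smul_comm, ha₀p.symm.mul_mul_mul_comm,
    ha₀q.symm.mul_mul_mul_comm, ha₁p.symm.mul_mul_mul_comm, ha₁q.symm.mul_mul_mul_comm, ha₀, ha₁,
    one_mul, hqp, mul_neg]
  module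

theorem smul_one_sub_sq_add_neg_smul_add_sq {a₀ a₁ p q : R} (ha₀ : a₀ * a₀ = 1) (ha₁ : a₁ * a₁ = 1)
    (ha₀p : Commute a₀ p) (ha₁q : Commute a₁ q) (α c : K) :
    (c • 1 - a₁ * q) ^ 2 + (-(c * α) • a₀ + p) ^ 2 =
      (c ^ 2 * (α ^ 2 + 1)) • 1 + (p ^ 2 + q ^ 2) - (2 * c) • (α • (a₀ * p) + a₁ * q) := by
  simp only [sq, add_mul, mul_add, sub_mul, mul_sub, smul_mul_assoc, mul_smul_comm,
    ha₁q.symm.mul_mul_mul_comm, ha₀, ha₁, one_mul, mul_one, ha₀p.eq]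
  module

def biasedCHSH (α : K) (a₀ a₁ b₀ b₁ : R) : R :=
  α • (a₀ * b₀ + a₀ * b₁) + a₁ * b₀ - a₁ * b₁

theorem biasedCHSH_eq (α : K) (a₀ a₁ b₀ b₁ : R) :
    biasedCHSH α a₀ a₁ b₀ b₁ = α • (a₀ * (b₀ + b₁)) + a₁ * (b₀ - b₁) := by
  rw [biasedCHSH, mul_add, mul_sub]
  abel

variable {a₀ a₁ b₀ b₁ : R} (ha₀ : a₀ * a₀ = 1) (ha₁ : a₁ * a₁ = 1) (hb₀ : b₀ * b₀ = 1)
  (hb₁ : b₁ * b₁ = 1) (h₀₀ : Commute a₀ b₀) (h₀₁ : Commute a₀ b₁) (h₁₀ : Commute a₁ b₀)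
  (h₁₁ : Commute a₁ b₁)
include ha₀ ha₁ hb₀ hb₁ h₀₀ h₀₁ h₁₀ h₁₁

theorem biasedCHSH_sq_add_sq (α : K) :
    biasedCHSH α a₀ a₁ b₀ b₁ ^ 2 + (α • (a₀ * (b₀ - b₁)) + a₁ * (b₀ + b₁)) ^ 2 =
      (4 * (α ^ 2 + 1)) • 1 := by
  rw [biasedCHSH_eq, sq_add_sq_of_anticommute ha₀ ha₁ (h₀₀.add_right h₀₁) (h₀₀.sub_right h₀₁)
    (h₁₀.add_right h₁₁) (h₁₀.sub_right h₁₁) (add_mul_sub_add_sub_mul_add_eq_zero hb₀ hb₁),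
    add_sq_add_sub_sq_eq_four hb₀ hb₁, mul_comm, mul_smul, ofNat_smul_eq_nsmul, nsmul_one,
    Nat.cast_ofNat]

theorem sq_add_sq_eq_sub_smul_biasedCHSH (α c : K) :
    (c • 1 - a₁ * (b₀ - b₁)) ^ 2 + (-(c * α) • a₀ + b₀ + b₁) ^ 2 =
      (c ^ 2 * (α ^ 2 + 1) + 4) • 1 - (2 * c) • biasedCHSH α a₀ a₁ b₀ b₁ := by
  rw [add_assoc _ b₀,
    smul_one_sub_sq_add_neg_smul_add_sq ha₀ ha₁ (h₀₀.add_right h₀₁) (h₁₀.sub_right h₁₁),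
    add_sq_add_sub_sq_eq_four hb₀ hb₁, biasedCHSH_eq, add_smul _ 4, ofNat_smul_eq_nsmul,
    nsmul_one, Nat.cast_ofNat]

end Algebra

section Field

variable {K R : Type*} [Field K] [Ring R] [Algebra K R]
variable {a₀ a₁ b₀ b₁ : R} (ha₀ : a₀ * a₀ = 1) (ha₁ : a₁ * a₁ = 1) (hb₀ : b₀ * b₀ = 1)
  (hb₁ : b₁ * b₁ = 1) (h₀₀ : Commute a₀ b₀) (h₀₁ : Commute a₀ b₁) (h₁₀ : Commute a₁ b₀)
  (h₁₁ : Commute a₁ b₁)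
include ha₀ ha₁ hb₀ hb₁ h₀₀ h₀₁ h₁₀ h₁₁

theorem sum_sq_eq_smul_sub_biasedCHSH {α η : K} (hα : α ≠ 0) (hη : η ≠ 0)
    (hηα : η ^ 2 = 4 * (α ^ 2 + 1)) :
    (η • 1 - biasedCHSH α a₀ a₁ b₀ b₁) ^ 2 + α ^ 2 • (a₀ * (b₀ - b₁) + α⁻¹ • (a₁ * (b₀ + b₁))) ^ 2 +
        (α ^ 2 - 1) • ((η / (α ^ 2 + 1)) • 1 - a₁ * (b₀ - b₁)) ^ 2 +
        (α ^ 2 - 1) • ((-(η * α / (α ^ 2 + 1))) • a₀ + b₀ + b₁) ^ 2 =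
      (16 * α ^ 2 / η) • (η • 1 - biasedCHSH α a₀ a₁ b₀ b₁) := by
  set B := biasedCHSH α a₀ a₁ b₀ b₁
  have hα1 : α ^ 2 + 1 ≠ 0 := by
    rintro h
    rw [h, mul_zero, pow_eq_zero_iff two_ne_zero] at hηα
    exact hη hηα
  have hS : α ^ 2 • (a₀ * (b₀ - b₁) + α⁻¹ • (a₁ * (b₀ + b₁))) ^ 2 =
      (α • (a₀ * (b₀ - b₁)) + a₁ * (b₀ + b₁)) ^ 2 := by
    rw [← smul_pow, smul_add, smul_smul, mul_inv_cancel₀ hα, one_smul]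
  have hBS := biasedCHSH_sq_add_sq ha₀ ha₁ hb₀ hb₁ h₀₀ h₀₁ h₁₀ h₁₁ α
  have hTU := sq_add_sq_eq_sub_smul_biasedCHSH ha₀ ha₁ hb₀ hb₁ h₀₀ h₀₁ h₁₀ h₁₁ α (η / (α ^ 2 + 1))
  rw [div_mul_eq_mul_div] at hTU
  have hsq : (η • 1 - B) ^ 2 = η ^ 2 • 1 - (2 * η) • B + B ^ 2 := by
    simp only [sq, sub_mul, mul_sub, smul_mul_assoc, mul_smul_comm, one_mul, mul_one]
    module
  rw [hS, add_assoc _ ((α ^ 2 - 1) • _), ← smul_add, hTU, hsq, add_assoc _ (B ^ 2), hBS]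
  match_scalars
  · field_simp
    linear_combination (2 * α ^ 2) * hηα
  · field_simp
    linear_combination (-4 * α ^ 2) * hηα

end Field

section Star

variable {K R : Type*} [CommRing K] [StarRing K] [Ring R] [StarRing R] [Algebra K R]
  [StarModule K R]

theorem IsSelfAdjoint.biasedCHSH {α : K} {a₀ a₁ b₀ b₁ : R} (hα : IsSelfAdjoint α)
    (ha₀ : IsSelfAdjoint a₀) (ha₁ : IsSelfAdjoint a₁) (hb₀ : IsSelfAdjoint b₀)
    (hb₁ : IsSelfAdjoint b₁) (h₀₀ : Commute a₀ b₀) (h₀₁ : Commute a₀ b₁) (h₁₀ : Commute a₁ b₀)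
    (h₁₁ : Commute a₁ b₁) : IsSelfAdjoint (biasedCHSH α a₀ a₁ b₀ b₁) :=
  ((hα.smul (((ha₀.commute_iff hb₀).mp h₀₀).add ((ha₀.commute_iff hb₁).mp h₀₁))).add
    ((ha₁.commute_iff hb₀).mp h₁₀)).sub ((ha₁.commute_iff hb₁).mp h₁₁)

end Star

section Hilbert

open scoped ComplexOrder

variable {𝕜 E : Type*} [RCLike 𝕜] [NormedAddCommGroup E] [InnerProductSpace 𝕜 E] [CompleteSpace E]

theorem IsSelfAdjoint.isPositive_sq {T : E →L[𝕜] E} (hT : IsSelfAdjoint T) :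
    (T ^ 2).IsPositive := by
  have h := isPositive_adjoint_comp_self T
  rwa [hT.adjoint_eq] at h

theorem isPositive_smul_one_sub_biasedCHSH {A₀ A₁ B₀ B₁ : E →L[𝕜] E}
    (hA₀ : IsSelfAdjoint A₀) (hA₁ : IsSelfAdjoint A₁) (hB₀ : IsSelfAdjoint B₀)
    (hB₁ : IsSelfAdjoint B₁) (hA₀2 : A₀ * A₀ = 1) (hA₁2 : A₁ * A₁ = 1) (hB₀2 : B₀ * B₀ = 1)
    (hB₁2 : B₁ * B₁ = 1) (h₀₀ : Commute A₀ B₀) (h₀₁ : Commute A₀ B₁) (h₁₀ : Commute A₁ B₀)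
    (h₁₁ : Commute A₁ B₁) {α η : ℝ} (hα : 1 ≤ α) (hη : 0 < η) (hηα : η ^ 2 = 4 * (α ^ 2 + 1)) :
    ((η : 𝕜) • 1 - biasedCHSH (α : 𝕜) A₀ A₁ B₀ B₁).IsPositive := by
  have hsos := sum_sq_eq_smul_sub_biasedCHSH hA₀2 hA₁2 hB₀2 hB₁2 h₀₀ h₀₁ h₁₀ h₁₁
    (α := (α : 𝕜)) (η := (η : 𝕜)) (by exact_mod_cast (zero_lt_one.trans_le hα).ne')
    (by exact_mod_cast hη.ne') (by exact_mod_cast hηα)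
  have hr (r : ℝ) : IsSelfAdjoint (r : 𝕜) := RCLike.conj_ofReal r
  have hA₀B : IsSelfAdjoint (A₀ * (B₀ - B₁)) :=
    (hA₀.commute_iff (hB₀.sub hB₁)).mp (h₀₀.sub_right h₀₁)
  have hA₁B : IsSelfAdjoint (A₁ * (B₀ + B₁)) :=
    (hA₁.commute_iff (hB₀.add hB₁)).mp (h₁₀.add_right h₁₁)
  have hA₁B' : IsSelfAdjoint (A₁ * (B₀ - B₁)) :=
    (hA₁.commute_iff (hB₀.sub hB₁)).mp (h₁₀.sub_right h₁₁)
  rw [(eq_inv_smul_iff₀ (by exact_mod_cast (by positivity : 16 * α ^ 2 / η ≠ 0))).mpr hsos.symm]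
  refine .smul_of_nonneg (.add (.add (.add ?_ ?_) ?_) ?_) (by norm_cast; positivity)
  · exact (((hr η).smul (.one _)).sub
      (.biasedCHSH (hr α) hA₀ hA₁ hB₀ hB₁ h₀₀ h₀₁ h₁₀ h₁₁)).isPositive_sq
  · have hS : IsSelfAdjoint ((α : 𝕜)⁻¹) := by simp [IsSelfAdjoint, RCLike.star_def]
    exact (hA₀B.add (hS.smul hA₁B)).isPositive_sq.smul_of_nonneg (by norm_cast; positivity)
  · have hT : IsSelfAdjoint ((η / (α ^ 2 + 1) : 𝕜)) := by
      simp [IsSelfAdjoint, RCLike.star_def]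
    exact ((hT.smul (.one _)).sub hA₁B').isPositive_sq.smul_of_nonneg (by norm_cast; nlinarith)
  · have hU : IsSelfAdjoint (-(η * α / (α ^ 2 + 1) : 𝕜)) := by
      simp [IsSelfAdjoint, RCLike.star_def]
    exact (((hU.smul hA₀).add hB₀).add hB₁).isPositive_sq.smul_of_nonneg (by norm_cast; nlinarith)

end Hilbert

theorem sqrt_four_div_sq_add_one {α η : ℝ} (hη : 0 < η) (hηα : η ^ 2 = 4 * (α ^ 2 + 1)) :
    √(4 / (α ^ 2 + 1)) = 4 / η := by
  rw [Real.sqrt_eq_iff_mul_self_eq_of_pos (by positivity)]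
  field_simp
  linear_combination -hηα

theorem stmt_2 {H : Type*} [NormedAddCommGroup H] [InnerProductSpace ℂ H] [CompleteSpace H]
    (A₀ A₁ B₀ B₁ : H →L[ℂ] H)
    (hA₀ : IsSelfAdjoint A₀) (hA₁ : IsSelfAdjoint A₁)
    (hB₀ : IsSelfAdjoint B₀) (hB₁ : IsSelfAdjoint B₁)
    (hA₀2 : A₀ * A₀ = 1) (hA₁2 : A₁ * A₁ = 1) (hB₀2 : B₀ * B₀ = 1) (hB₁2 : B₁ * B₁ = 1)
    (hc00 : A₀ * B₀ = B₀ * A₀) (hc01 : A₀ * B₁ = B₁ * A₀)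
    (hc10 : A₁ * B₀ = B₀ * A₁) (hc11 : A₁ * B₁ = B₁ * A₁)
    (α : ℝ) (hα : 1 ≤ α)
    (η Δ : ℝ) (hη : η = 2 * Real.sqrt (1 + α ^ 2))
    (hΔ : Δ = 2 * (α ^ 2 - 1) * Real.sqrt (4 / (α ^ 2 + 1)))
    (B S₀ : H →L[ℂ] H)
    (hB : B = (α : ℂ) • (A₀ * B₀ + A₀ * B₁) + A₁ * B₀ - A₁ * B₁)
    (hS₀ : S₀ = A₀ * (B₀ - B₁) + (α⁻¹ : ℂ) • (A₁ * (B₀ + B₁))) :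
    (η : ℂ) • (1 : H →L[ℂ] H) - B =
      ((Δ + 2 * η : ℝ)⁻¹ : ℂ) •
        (((η : ℂ) • (1 : H →L[ℂ] H) - B) ^ 2 + ((α ^ 2 : ℝ) : ℂ) • S₀ ^ 2 +
          ((α ^ 2 - 1 : ℝ) : ℂ) •
            (((η / (α ^ 2 + 1) : ℝ) : ℂ) • (1 : H →L[ℂ] H) - A₁ * (B₀ - B₁)) ^ 2 +
          ((α ^ 2 - 1 : ℝ) : ℂ) •
            ((-(η * α / (α ^ 2 + 1) : ℝ) : ℂ) • A₀ + B₀ + B₁) ^ 2) ∧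
    ((η : ℂ) • (1 : H →L[ℂ] H) - B).IsPositive := by
  have hα₀ : 0 < α := zero_lt_one.trans_le hα
  have hη₀ : 0 < η := by rw [hη]; positivity
  have hηα : η ^ 2 = 4 * (α ^ 2 + 1) := by
    rw [hη, mul_pow, Real.sq_sqrt (by positivity)]
    ring
  have hΔη : Δ + 2 * η = 16 * α ^ 2 / η := by
    rw [hΔ, sqrt_four_div_sq_add_one hη₀ hηα]
    field_simp
    linear_combination 2 * hηα
  subst hB hS₀
  refine ⟨?_, isPositive_smul_one_sub_biasedCHSH hA₀ hA₁ hB₀ hB₁ hA₀2 hA₁2 hB₀2 hB₁2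
    hc00 hc01 hc10 hc11 hα hη₀ hηα⟩
  rw [eq_inv_smul_iff₀ (Complex.ofReal_ne_zero.mpr (by rw [hΔη]; positivity)), hΔη]
  push_cast
  exact (sum_sq_eq_smul_sub_biasedCHSH hA₀2 hA₁2 hB₀2 hB₁2 hc00 hc01 hc10 hc11
    (by exact_mod_cast hα₀.ne') (by exact_mod_cast hη₀.ne') (by exact_mod_cast hηα)).symm
end

section
/- Let A₀, A₁, B₀, B₁ be self-adjoint operators with A₀² = A₁² = B₀² = B₁² = 1 and [Aₓ, B_y] = 0. Set B̂ = η·1 − (βA₀ + A₀B₀ + A₀B₁ + A₁B₀ − A₁B₁) with η = √(8 + 2β²), for real β with |β| ≤ 2. Then B̂ = (1/(2η))·[B̂² + (βA₁ − A₀(B₀−B₁) − A₁(B₀+B₁))²], and consequently B̂ is positive semidefinite. -/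
open ContinuousLinearMap

universe u v

/-! With `D` the tilted CHSH operator and `C` its complement `βA₁ - A₀(B₀ - B₁) - A₁(B₀ + B₁)`,
the relations `Aₓ² = B_y² = 1` and `[Aₓ, B_y] = 0` give `D² + C² = 8 + 2β² = η²`: the cross terms
of `D²` and `C²` cancel pairwise. Hence `(η - D)² + C² = 2η(η - D)`, exhibiting `η - D` as a
positive multiple of a sum of squares of self-adjoint operators. -/

section TiltedCHSH

variable {𝕜 : Type u} {R : Type v} [CommRing 𝕜] [Ring R] [Algebra 𝕜 R]

def tiltedCHSH (s : 𝕜) (a b p q : R) : R := s • a + a * p + a * q + b * p - b * q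

def tiltedCHSHComplement (s : 𝕜) (a b p q : R) : R := s • b - a * (p - q) - b * (p + q)

variable {a b p q : R}

theorem tiltedCHSH_mul_self_add_mul_self (ha : a * a = 1) (hb : b * b = 1) (hp : p * p = 1)
    (hq : q * q = 1) (hap : Commute a p) (haq : Commute a q) (hbp : Commute b p)
    (hbq : Commute b q) (s : 𝕜) :
    tiltedCHSH s a b p q * tiltedCHSH s a b p q +
        tiltedCHSHComplement s a b p q * tiltedCHSHComplement s a b p q =
      (8 + 2 * s ^ 2) • (1 : R) := by
  have cancel : ∀ {u : R}, u * u = 1 → ∀ x, u * (u * x) = x := fun hu x => by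
    rw [← mul_assoc, hu, one_mul]
  simp only [tiltedCHSH, tiltedCHSHComplement, mul_add, add_mul, mul_sub, sub_mul,
    smul_mul_assoc, mul_smul_comm, smul_smul, smul_add, smul_sub, mul_assoc,
    hap.symm.left_comm, haq.symm.left_comm, hbp.symm.left_comm, hbq.symm.left_comm,
    ← hap.eq, ← haq.eq, ← hbp.eq, ← hbq.eq,
    cancel ha, cancel hb, ha, hb, hp, hq, mul_one]
  module

theorem smul_one_sub_sq_add_sq {c : 𝕜} {x y : R} (h : x * x + y * y = c ^ 2 • 1) :
    (c • 1 - x) ^ 2 + y ^ 2 = (2 * c) • (c • 1 - x) := by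
  calc (c • 1 - x) ^ 2 + y ^ 2 = c ^ 2 • (1 : R) - (2 * c) • x + (x * x + y * y) := by
        simp only [sq, mul_sub, sub_mul, smul_mul_assoc, mul_smul_comm, one_mul, mul_one]
        module
    _ = (2 * c) • (c • 1 - x) := by rw [h]; module

end TiltedCHSH

section SelfAdjoint

variable {𝕜 : Type u} {R : Type v} [CommRing 𝕜] [StarRing 𝕜] [Ring R] [StarRing R]
  [Algebra 𝕜 R] [StarModule 𝕜 R] {s : 𝕜} {a b p q : R}

theorem IsSelfAdjoint.tiltedCHSH (hs : IsSelfAdjoint s) (ha : IsSelfAdjoint a)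
    (hb : IsSelfAdjoint b) (hp : IsSelfAdjoint p) (hq : IsSelfAdjoint q) (hap : Commute a p)
    (haq : Commute a q) (hbp : Commute b p) (hbq : Commute b q) :
    IsSelfAdjoint (tiltedCHSH s a b p q) :=
  ((((hs.smul ha).add ((ha.commute_iff hp).mp hap)).add ((ha.commute_iff hq).mp haq)).add
    ((hb.commute_iff hp).mp hbp)).sub ((hb.commute_iff hq).mp hbq)

theorem IsSelfAdjoint.tiltedCHSHComplement (hs : IsSelfAdjoint s) (ha : IsSelfAdjoint a)
    (hb : IsSelfAdjoint b) (hp : IsSelfAdjoint p) (hq : IsSelfAdjoint q) (hap : Commute a p)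
    (haq : Commute a q) (hbp : Commute b p) (hbq : Commute b q) :
    IsSelfAdjoint (tiltedCHSHComplement s a b p q) :=
  ((hs.smul hb).sub ((ha.commute_iff (hp.sub hq)).mp (hap.sub_right haq))).sub
    ((hb.commute_iff (hp.add hq)).mp (hbp.add_right hbq))

end SelfAdjoint

theorem stmt_3_general {H : Type*} [NormedAddCommGroup H] [InnerProductSpace ℂ H] [CompleteSpace H]
    (A₀ A₁ B₀ B₁ : H →L[ℂ] H)
    (hA₀ : IsSelfAdjoint A₀) (hA₁ : IsSelfAdjoint A₁)
    (hB₀ : IsSelfAdjoint B₀) (hB₁ : IsSelfAdjoint B₁)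
    (hA₀2 : A₀ * A₀ = 1) (hA₁2 : A₁ * A₁ = 1) (hB₀2 : B₀ * B₀ = 1) (hB₁2 : B₁ * B₁ = 1)
    (hc00 : A₀ * B₀ = B₀ * A₀) (hc01 : A₀ * B₁ = B₁ * A₀)
    (hc10 : A₁ * B₀ = B₀ * A₁) (hc11 : A₁ * B₁ = B₁ * A₁)
    (β η : ℝ) (hη : η = Real.sqrt (8 + 2 * β ^ 2))
    (Bhat : H →L[ℂ] H)
    (hBhat : Bhat = (η : ℂ) • (1 : H →L[ℂ] H) -
      ((β : ℂ) • A₀ + A₀ * B₀ + A₀ * B₁ + A₁ * B₀ - A₁ * B₁)) :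
    Bhat = ((2 * η : ℝ)⁻¹ : ℂ) •
        (Bhat ^ 2 + ((β : ℂ) • A₁ - A₀ * (B₀ - B₁) - A₁ * (B₀ + B₁)) ^ 2) ∧
      Bhat.IsPositive := by
  change Bhat = (η : ℂ) • 1 - tiltedCHSH (β : ℂ) A₀ A₁ B₀ B₁ at hBhat
  have hηpos : 0 < η := hη ▸ Real.sqrt_pos.mpr (by positivity)
  have hη_sq : (η : ℂ) ^ 2 = 8 + 2 * (β : ℂ) ^ 2 := by
    rw [hη]
    exact_mod_cast Real.sq_sqrt (by positivity : (0 : ℝ) ≤ 8 + 2 * β ^ 2)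
  have hsos : Bhat ^ 2 + tiltedCHSHComplement (β : ℂ) A₀ A₁ B₀ B₁ ^ 2 =
      ((2 * η : ℝ) : ℂ) • Bhat := by
    rw [hBhat, Complex.ofReal_mul, Complex.ofReal_ofNat]
    refine smul_one_sub_sq_add_sq ?_
    rw [hη_sq]
    exact tiltedCHSH_mul_self_add_mul_self hA₀2 hA₁2 hB₀2 hB₁2 hc00 hc01 hc10 hc11 _
  have hBhat_eq : Bhat = ((2 * η : ℝ)⁻¹ : ℂ) •
      (Bhat ^ 2 + tiltedCHSHComplement (β : ℂ) A₀ A₁ B₀ B₁ ^ 2) := by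
    rw [hsos, smul_smul, inv_mul_cancel₀ (Complex.ofReal_ne_zero.mpr (by positivity)), one_smul]
  refine ⟨hBhat_eq, ?_⟩
  have hreal : ∀ r : ℝ, IsSelfAdjoint (r : ℂ) := Complex.conj_ofReal
  have hBhat_sa : IsSelfAdjoint Bhat := hBhat ▸
    ((hreal η).smul (.one _)).sub ((hreal β).tiltedCHSH hA₀ hA₁ hB₀ hB₁ hc00 hc01 hc10 hc11)
  have hC_sa := (hreal β).tiltedCHSHComplement hA₀ hA₁ hB₀ hB₁ hc00 hc01 hc10 hc11
  rw [hBhat_eq, ← nonneg_iff_isPositive, sq, sq]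
  open ComplexOrder in
  exact smul_nonneg (inv_nonneg.mpr (Complex.zero_le_real.mpr (by positivity)))
    (add_nonneg hBhat_sa.mul_self_nonneg hC_sa.mul_self_nonneg)

theorem stmt_3 {H : Type*} [NormedAddCommGroup H] [InnerProductSpace ℂ H] [CompleteSpace H]
    (A₀ A₁ B₀ B₁ : H →L[ℂ] H)
    (hA₀ : IsSelfAdjoint A₀) (hA₁ : IsSelfAdjoint A₁)
    (hB₀ : IsSelfAdjoint B₀) (hB₁ : IsSelfAdjoint B₁)
    (hA₀2 : A₀ * A₀ = 1) (hA₁2 : A₁ * A₁ = 1) (hB₀2 : B₀ * B₀ = 1) (hB₁2 : B₁ * B₁ = 1)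
    (hc00 : A₀ * B₀ = B₀ * A₀) (hc01 : A₀ * B₁ = B₁ * A₀)
    (hc10 : A₁ * B₀ = B₀ * A₁) (hc11 : A₁ * B₁ = B₁ * A₁)
    (β η : ℝ) (hβ : |β| ≤ 2) (hη : η = Real.sqrt (8 + 2 * β ^ 2))
    (Bhat : H →L[ℂ] H)
    (hBhat : Bhat = (η : ℂ) • (1 : H →L[ℂ] H) -
      ((β : ℂ) • A₀ + A₀ * B₀ + A₀ * B₁ + A₁ * B₀ - A₁ * B₁)) :
    Bhat = ((2 * η : ℝ)⁻¹ : ℂ) •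
        (Bhat ^ 2 + ((β : ℂ) • A₁ - A₀ * (B₀ - B₁) - A₁ * (B₀ + B₁)) ^ 2) ∧
      Bhat.IsPositive :=
  stmt_3_general A₀ A₁ B₀ B₁ hA₀ hA₁ hB₀ hB₁ hA₀2 hA₁2 hB₀2 hB₁2 hc00 hc01 hc10 hc11 β η hη Bhat
    hBhat
end

section
/- Let A₀, A₁, B₀, B₁ be self-adjoint operators with A₀² = A₁² = B₀² = B₁² = 1 and [Aₓ, B_y] = 0. Set B̂ = η·1 − (βA₀ + A₀B₀ + A₀B₁ + A₁B₀ − A₁B₁) with η = √(8 + 2β²). Then B̂ = (1/(2η))·[(2A₀ − (η/2)(B₀+B₁) + (β/2)(A₀(B₀+B₁) − A₁(B₀−B₁)))² + (2A₁ − (η/2)(B₀−B₁) + (β/2)(A₀(B₀−B₁) − A₁(B₀+B₁)))²]. -/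
open ContinuousLinearMap

theorem stmt_4 {H : Type*} [NormedAddCommGroup H] [InnerProductSpace ℂ H] [CompleteSpace H]
    (A₀ A₁ B₀ B₁ : H →L[ℂ] H)
    (hA₀ : IsSelfAdjoint A₀) (hA₁ : IsSelfAdjoint A₁)
    (hB₀ : IsSelfAdjoint B₀) (hB₁ : IsSelfAdjoint B₁)
    (hA₀2 : A₀ * A₀ = 1) (hA₁2 : A₁ * A₁ = 1) (hB₀2 : B₀ * B₀ = 1) (hB₁2 : B₁ * B₁ = 1)
    (hc00 : A₀ * B₀ = B₀ * A₀) (hc01 : A₀ * B₁ = B₁ * A₀)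
    (hc10 : A₁ * B₀ = B₀ * A₁) (hc11 : A₁ * B₁ = B₁ * A₁)
    (β η : ℝ) (hη : η = Real.sqrt (8 + 2 * β ^ 2))
    (Bhat : H →L[ℂ] H)
    (hBhat : Bhat = (η : ℂ) • (1 : H →L[ℂ] H) -
      ((β : ℂ) • A₀ + A₀ * B₀ + A₀ * B₁ + A₁ * B₀ - A₁ * B₁)) :
    Bhat = ((2 * η : ℝ)⁻¹ : ℂ) •
        (((2 : ℂ) • A₀ - ((η / 2 : ℝ) : ℂ) • (B₀ + B₁) +
            ((β / 2 : ℝ) : ℂ) • (A₀ * (B₀ + B₁) - A₁ * (B₀ - B₁))) ^ 2 +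
          ((2 : ℂ) • A₁ - ((η / 2 : ℝ) : ℂ) • (B₀ - B₁) +
            ((β / 2 : ℝ) : ℂ) • (A₀ * (B₀ - B₁) - A₁ * (B₀ + B₁))) ^ 2) := by
  have hpos : (0:ℝ) < 8 + 2 * β ^ 2 := by positivity
  have hηpos : 0 < η := by rw [hη]; exact Real.sqrt_pos.mpr hpos
  have hη2 : (η : ℂ) * (η : ℂ) = 8 + 2 * (β:ℂ) ^ 2 := by
    have h : η * η = 8 + 2 * β ^ 2 := by rw [hη]; exact Real.mul_self_sqrt hpos.le
    exact_mod_cast congrArg (Complex.ofReal) h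
  have sA₀ : ∀ X : H →L[ℂ] H, A₀ * (A₀ * X) = X := fun X => by
    rw [← mul_assoc, hA₀2, one_mul]
  have sA₁ : ∀ X : H →L[ℂ] H, A₁ * (A₁ * X) = X := fun X => by
    rw [← mul_assoc, hA₁2, one_mul]
  have sB₀ : ∀ X : H →L[ℂ] H, B₀ * (B₀ * X) = X := fun X => by
    rw [← mul_assoc, hB₀2, one_mul]
  have sB₁ : ∀ X : H →L[ℂ] H, B₁ * (B₁ * X) = X := fun X => by
    rw [← mul_assoc, hB₁2, one_mul]
  have k00 : B₀ * A₀ = A₀ * B₀ := hc00.symm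
  have k01 : B₁ * A₀ = A₀ * B₁ := hc01.symm
  have k10 : B₀ * A₁ = A₁ * B₀ := hc10.symm
  have k11 : B₁ * A₁ = A₁ * B₁ := hc11.symm
  have k00' : ∀ X : H →L[ℂ] H, B₀ * (A₀ * X) = A₀ * (B₀ * X) := fun X => by
    rw [← mul_assoc, k00, mul_assoc]
  have k01' : ∀ X : H →L[ℂ] H, B₁ * (A₀ * X) = A₀ * (B₁ * X) := fun X => by
    rw [← mul_assoc, k01, mul_assoc]
  have k10' : ∀ X : H →L[ℂ] H, B₀ * (A₁ * X) = A₁ * (B₀ * X) := fun X => by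
    rw [← mul_assoc, k10, mul_assoc]
  have k11' : ∀ X : H →L[ℂ] H, B₁ * (A₁ * X) = A₁ * (B₁ * X) := fun X => by
    rw [← mul_assoc, k11, mul_assoc]
  have key : (((2 : ℂ) • A₀ - ((η / 2 : ℝ) : ℂ) • (B₀ + B₁) +
            ((β / 2 : ℝ) : ℂ) • (A₀ * (B₀ + B₁) - A₁ * (B₀ - B₁))) ^ 2 +
          ((2 : ℂ) • A₁ - ((η / 2 : ℝ) : ℂ) • (B₀ - B₁) +
            ((β / 2 : ℝ) : ℂ) • (A₀ * (B₀ - B₁) - A₁ * (B₀ + B₁))) ^ 2)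
      = ((η:ℂ) * (η:ℂ)) • (1 : H →L[ℂ] H) + ((8:ℂ) + 2 * (β:ℂ)^2) • (1 : H →L[ℂ] H)
        - (2 * (η:ℂ)) • ((β : ℂ) • A₀ + A₀ * B₀ + A₀ * B₁ + A₁ * B₀ - A₁ * B₁) := by
    push_cast
    simp only [pow_two, mul_add, add_mul, mul_sub, sub_mul, smul_mul_assoc, mul_smul_comm,
      smul_add, smul_sub, smul_smul, mul_one, one_mul, mul_assoc,
      hA₀2, hA₁2, hB₀2, hB₁2, sA₀, sA₁, sB₀, sB₁, k00, k01, k10, k11, k00', k01', k10', k11']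
    module
  rw [hBhat, key, hη2]
  have h2η : ((2 * η : ℝ) : ℂ) ≠ 0 := by
    exact_mod_cast (by positivity : (2 * η : ℝ) ≠ 0)
  rw [show ((2 * η : ℝ)⁻¹ : ℂ) = (((2 * η : ℝ) : ℂ))⁻¹ by push_cast; ring]
  rw [eq_inv_smul_iff₀ h2η]
  push_cast
  rw [smul_sub, smul_smul, mul_assoc, hη2]
  module
end

section
/- In the two-qubit Hilbert space ℂ²⊗ℂ², with A₀ = σ_z⊗1, A₁ = σ_x⊗1, B₀ = 1⊗(cosμ σ_z + sinμ σ_x), B₁ = 1⊗(cosμ σ_z − sinμ σ_x), and state |ψ⟩ = cosθ|00⟩ + sinθ|11⟩ with tanμ = sin(2θ)/α and β = 2cos(2θ)/√(α² + sin²(2θ)), the expectation ⟨ψ| βA₀ + α(A₀B₀ + A₀B₁) + A₁B₀ − A₁B₁ |ψ⟩ equals √((4+β²)(1+α²)). -/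
open Matrix Real
open Kronecker

noncomputable def σz : Matrix (Fin 2) (Fin 2) ℂ := !![1, 0; 0, -1]
noncomputable def σx : Matrix (Fin 2) (Fin 2) ℂ := !![0, 1; 1, 0]

/-!
Since `B₀ + B₁ = 1 ⊗ 2 cos μ σ_z` and `B₀ - B₁ = 1 ⊗ 2 sin μ σ_x`, the Bell operator equals
`β σ_z ⊗ 1 + 2α cos μ σ_z ⊗ σ_z + 2 sin μ σ_x ⊗ σ_x`, whose expectation in `ψ` is
`β cos 2θ + 2α cos μ + 2 sin μ sin 2θ`. With `r = √(α² + sin² 2θ)`, `tan μ = sin 2θ / α` gives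
`cos μ = α / r`, `sin μ = sin 2θ / r`, and `β = 2 cos 2θ / r`, so the value is `2 (1 + α²) / r`,
which is also `√((4 + β²)(1 + α²))`.
-/

lemma kronecker_one_mul_one_kronecker {R m n : Type*} [CommSemiring R] [Fintype m] [DecidableEq m]
    [Fintype n] [DecidableEq n] (A : Matrix m m R) (B : Matrix n n R) :
    (A ⊗ₖ 1) * (1 ⊗ₖ B) = A ⊗ₖ B := by
  rw [← mul_kronecker_mul, mul_one, one_mul]

lemma kronecker_sub {R l m n p : Type*} [Ring R] (A : Matrix l m R) (B C : Matrix n p R) :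
    A ⊗ₖ (B - C) = A ⊗ₖ B - A ⊗ₖ C := by
  ext
  simp [mul_sub]

noncomputable def schmidtState (c s : ℝ) : Fin 2 × Fin 2 → ℂ :=
  fun p => if p = (0, 0) then (c : ℂ) else if p = (1, 1) then (s : ℂ) else 0

lemma star_schmidtState_dotProduct_kronecker_mulVec (c s : ℝ) (P Q : Matrix (Fin 2) (Fin 2) ℂ) :
    star (schmidtState c s) ⬝ᵥ (P ⊗ₖ Q) *ᵥ schmidtState c s =
      c ^ 2 * (P 0 0 * Q 0 0) + c * s * (P 0 1 * Q 0 1 + P 1 0 * Q 1 0) +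
        s ^ 2 * (P 1 1 * Q 1 1) := by
  simp only [dotProduct, Pi.star_apply, schmidtState, RCLike.star_def, mulVec, kroneckerMap_apply,
    mul_ite, mul_zero, Fintype.sum_prod_type, Prod.mk.injEq, Fin.sum_univ_two, and_true,
    zero_ne_one, and_false, ↓reduceIte, one_ne_zero, add_zero, zero_add, Complex.conj_ofReal,
    map_zero, zero_mul]
  ring

lemma star_schmidtState_dotProduct_pauli_mulVec (c s b p q : ℝ) :
    star (schmidtState c s) ⬝ᵥ ((b : ℂ) • σz ⊗ₖ 1 + (p : ℂ) • σz ⊗ₖ σz + (q : ℂ) • σx ⊗ₖ σx) *ᵥ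
        schmidtState c s =
      ((b * (c ^ 2 - s ^ 2) + p * (c ^ 2 + s ^ 2) + q * (2 * c * s) : ℝ) : ℂ) := by
  simp only [add_mulVec, smul_mulVec, dotProduct_add, dotProduct_smul,
    star_schmidtState_dotProduct_kronecker_mulVec]
  simp only [σz, σx, of_apply, cons_val', cons_val_zero, cons_val_one, cons_val_fin_one,
    one_apply_eq, one_apply_ne, ne_eq, zero_ne_one, one_ne_zero, not_false_eq_true, mul_one,
    mul_zero, mul_neg, neg_neg, add_zero, zero_add, smul_eq_mul]
  push_cast
  ring

lemma tiltedCHSH_operator_eq (α β μ : ℝ) :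
    let B₀ : Matrix (Fin 2) (Fin 2) ℂ := (cos μ : ℂ) • σz + (sin μ : ℂ) • σx
    let B₁ : Matrix (Fin 2) (Fin 2) ℂ := (cos μ : ℂ) • σz - (sin μ : ℂ) • σx
    (β : ℂ) • σz ⊗ₖ 1 + (α : ℂ) • ((σz ⊗ₖ 1) * (1 ⊗ₖ B₀) + (σz ⊗ₖ 1) * (1 ⊗ₖ B₁)) +
        (σx ⊗ₖ 1) * (1 ⊗ₖ B₀) - (σx ⊗ₖ 1) * (1 ⊗ₖ B₁) =
      (β : ℂ) • σz ⊗ₖ 1 + ((2 * α * cos μ : ℝ) : ℂ) • σz ⊗ₖ σz +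
        ((2 * sin μ : ℝ) : ℂ) • σx ⊗ₖ σx := by
  intro B₀ B₁
  have hsum : B₀ + B₁ = ((2 * cos μ : ℝ) : ℂ) • σz := by
    simp only [B₀, B₁]; push_cast; module
  have hdiff : B₀ - B₁ = ((2 * sin μ : ℝ) : ℂ) • σx := by
    simp only [B₀, B₁]; push_cast; module
  simp only [kronecker_one_mul_one_kronecker, add_sub_assoc, ← kronecker_add, ← kronecker_sub,
    hsum, hdiff, kronecker_smul, smul_smul]
  push_cast
  ring_nf

lemma sqrt_sq_add_sq_eq_mul {a t : ℝ} (ha : 0 < a) : √(a ^ 2 + t ^ 2) = a * √(1 + (t / a) ^ 2) := by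
  rw [← sqrt_sq ha.le, ← sqrt_mul (sq_nonneg a), sqrt_sq ha.le]
  congr 1
  field_simp

lemma cos_eq_div_sqrt_of_tan_eq_div {μ a t : ℝ} (ha : 0 < a) (hμ : μ ∈ Set.Ioo (-(π / 2)) (π / 2))
    (h : tan μ = t / a) : cos μ = a / √(a ^ 2 + t ^ 2) := by
  rw [← arctan_tan hμ.1 hμ.2, h, cos_arctan, sqrt_sq_add_sq_eq_mul ha]
  field_simp

lemma sin_eq_div_sqrt_of_tan_eq_div {μ a t : ℝ} (ha : 0 < a) (hμ : μ ∈ Set.Ioo (-(π / 2)) (π / 2))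
    (h : tan μ = t / a) : sin μ = t / √(a ^ 2 + t ^ 2) := by
  rw [← arctan_tan hμ.1 hμ.2, h, sin_arctan, sqrt_sq_add_sq_eq_mul ha]
  field_simp

lemma tiltedCHSH_value {a x y β : ℝ} (ha : 0 < a) (hxy : x ^ 2 + y ^ 2 = 1)
    (hβ : β = 2 * x / √(a ^ 2 + y ^ 2)) :
    β * x + 2 * a * (a / √(a ^ 2 + y ^ 2)) + 2 * (y / √(a ^ 2 + y ^ 2)) * y =
      √((4 + β ^ 2) * (1 + a ^ 2)) := by
  set r := √(a ^ 2 + y ^ 2)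
  have hr : 0 < r := sqrt_pos.mpr (by positivity)
  have hr2 : r ^ 2 = a ^ 2 + y ^ 2 := sq_sqrt (by positivity)
  have hsq : (4 + β ^ 2) * (1 + a ^ 2) = (2 * (1 + a ^ 2) / r) ^ 2 := by
    rw [hβ]
    field_simp
    linear_combination 4 * (hr2 + hxy)
  rw [hsq, sqrt_sq (by positivity), hβ]
  field_simp
  linear_combination hxy

theorem stmt_7_general (α β θ μ : ℝ) (hα : 1 ≤ α)
    (hμ : μ ∈ Set.Ioc 0 (π / 4))
    (hμθ : Real.tan μ = Real.sin (2 * θ) / α)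
    (hβ : β = 2 * Real.cos (2 * θ) / Real.sqrt (α ^ 2 + Real.sin (2 * θ) ^ 2))
    (A₀ A₁ B₀ B₁ : Matrix (Fin 2 × Fin 2) (Fin 2 × Fin 2) ℂ)
    (hA₀ : A₀ = σz ⊗ₖ (1 : Matrix (Fin 2) (Fin 2) ℂ))
    (hA₁ : A₁ = σx ⊗ₖ (1 : Matrix (Fin 2) (Fin 2) ℂ))
    (hB₀ : B₀ = (1 : Matrix (Fin 2) (Fin 2) ℂ) ⊗ₖ
      ((Real.cos μ : ℂ) • σz + (Real.sin μ : ℂ) • σx))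
    (hB₁ : B₁ = (1 : Matrix (Fin 2) (Fin 2) ℂ) ⊗ₖ
      ((Real.cos μ : ℂ) • σz - (Real.sin μ : ℂ) • σx))
    (ψ : Fin 2 × Fin 2 → ℂ)
    (hψ : ψ = fun p => if p = (0, 0) then (Real.cos θ : ℂ)
      else if p = (1, 1) then (Real.sin θ : ℂ) else 0) :
    star ψ ⬝ᵥ (((β : ℂ) • A₀ + (α : ℂ) • (A₀ * B₀ + A₀ * B₁) + A₁ * B₀ - A₁ * B₁).mulVec ψ) =
      (Real.sqrt ((4 + β ^ 2) * (1 + α ^ 2)) : ℂ) := by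
  have hμ' : μ ∈ Set.Ioo (-(π / 2)) (π / 2) :=
    ⟨by linarith [hμ.1, pi_pos], by linarith [hμ.2, pi_pos]⟩
  have hα0 : 0 < α := by linarith
  have hsin2θ : 2 * cos θ * sin θ = sin (2 * θ) := by rw [sin_two_mul]; ring
  replace hψ : ψ = schmidtState (cos θ) (sin θ) := hψ
  subst hA₀ hA₁ hB₀ hB₁ hψ
  rw [tiltedCHSH_operator_eq, star_schmidtState_dotProduct_pauli_mulVec,
    Complex.ofReal_inj, ← cos_two_mul', cos_sq_add_sin_sq, hsin2θ, mul_one,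
    cos_eq_div_sqrt_of_tan_eq_div hα0 hμ' hμθ, sin_eq_div_sqrt_of_tan_eq_div hα0 hμ' hμθ]
  exact tiltedCHSH_value hα0 (cos_sq_add_sin_sq _) hβ

theorem stmt_7 (α β θ μ : ℝ) (hα : 1 ≤ α) (hθ : θ ∈ Set.Ioc 0 (π / 4))
    (hμ : μ ∈ Set.Ioc 0 (π / 4))
    (hμθ : Real.tan μ = Real.sin (2 * θ) / α)
    (hβ : β = 2 * Real.cos (2 * θ) / Real.sqrt (α ^ 2 + Real.sin (2 * θ) ^ 2))
    (A₀ A₁ B₀ B₁ : Matrix (Fin 2 × Fin 2) (Fin 2 × Fin 2) ℂ)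
    (hA₀ : A₀ = σz ⊗ₖ (1 : Matrix (Fin 2) (Fin 2) ℂ))
    (hA₁ : A₁ = σx ⊗ₖ (1 : Matrix (Fin 2) (Fin 2) ℂ))
    (hB₀ : B₀ = (1 : Matrix (Fin 2) (Fin 2) ℂ) ⊗ₖ
      ((Real.cos μ : ℂ) • σz + (Real.sin μ : ℂ) • σx))
    (hB₁ : B₁ = (1 : Matrix (Fin 2) (Fin 2) ℂ) ⊗ₖ
      ((Real.cos μ : ℂ) • σz - (Real.sin μ : ℂ) • σx))
    (ψ : Fin 2 × Fin 2 → ℂ)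
    (hψ : ψ = fun p => if p = (0, 0) then (Real.cos θ : ℂ)
      else if p = (1, 1) then (Real.sin θ : ℂ) else 0) :
    star ψ ⬝ᵥ (((β : ℂ) • A₀ + (α : ℂ) • (A₀ * B₀ + A₀ * B₁) + A₁ * B₀ - A₁ * B₁).mulVec ψ) =
      (Real.sqrt ((4 + β ^ 2) * (1 + α ^ 2)) : ℂ) :=
  stmt_7_general α β θ μ hα hμ hμθ hβ A₀ A₁ B₀ B₁ hA₀ hA₁ hB₀ hB₁ ψ hψ
end

section
/- Let |ψ⟩ be a vector in a Hilbert space H_A ⊗ H_B, and let Z_A, X_A, Z_B, X_B be operators with Z_A, Z_B self-adjoint, Z_A² = Z_B² = 1, X_A² = 1 and [Z_A, Z_B] = [Z_A, X_B] = [X_A, Z_B] = [X_A, X_B] = 0, such that (Z_A − Z_B)|ψ⟩ = 0 and (sinθ·X_A(1 + Z_B) − cosθ·X_B(1 − Z_A))|ψ⟩ = 0 for some θ ∈ (0, π/4]. Then the vector Φ(|ψ⟩) = (1/4)[(1+Z_A)(1+Z_B)|ψ⟩⊗|00⟩ + X_B(1+Z_A)(1−Z_B)|ψ⟩⊗|01⟩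 + X_A(1−Z_A)(1+Z_B)|ψ⟩⊗|10⟩ + X_A X_B(1−Z_A)(1−Z_B)|ψ⟩⊗|11⟩] equals |junk⟩ ⊗ (cosθ|00⟩ + sinθ|11⟩) with |junk⟩ = (1+Z_A)|ψ⟩/(2cosθ). -/
open scoped TensorProduct
open ContinuousLinearMap

theorem stmt_9 {H : Type*} [NormedAddCommGroup H] [InnerProductSpace ℂ H] [CompleteSpace H]
    (ZA XA ZB XB : H →L[ℂ] H)
    (hZA : IsSelfAdjoint ZA) (hZB : IsSelfAdjoint ZB)
    (hZA2 : ZA * ZA = 1) (hZB2 : ZB * ZB = 1) (hXA2 : XA * XA = 1)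
    (hcZZ : ZA * ZB = ZB * ZA) (hcZX : ZA * XB = XB * ZA)
    (hcXZ : XA * ZB = ZB * XA) (hcXX : XA * XB = XB * XA)
    (θ : ℝ) (hθ : θ ∈ Set.Ioc 0 (Real.pi / 4))
    (ψ : H)
    (h1 : (ZA - ZB) ψ = 0)
    (h2 : ((Real.sin θ : ℂ) • (XA * (1 + ZB)) - (Real.cos θ : ℂ) • (XB * (1 - ZA))) ψ = 0)
    (e : Fin 2 × Fin 2 → EuclideanSpace ℂ (Fin 2 × Fin 2))
    (he : e = fun p => EuclideanSpace.single p 1)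
    (junk : H)
    (hjunk : junk = ((2 * Real.cos θ : ℝ)⁻¹ : ℂ) • ((1 + ZA) ψ)) :
    (4 : ℂ)⁻¹ •
      (((((1 + ZA) * (1 + ZB)) ψ) ⊗ₜ[ℂ] e (0, 0)) +
        ((XB * ((1 + ZA) * (1 - ZB))) ψ) ⊗ₜ[ℂ] e (0, 1) +
        ((XA * ((1 - ZA) * (1 + ZB))) ψ) ⊗ₜ[ℂ] e (1, 0) +
        ((XA * XB * ((1 - ZA) * (1 - ZB))) ψ) ⊗ₜ[ℂ] e (1, 1)) =
      junk ⊗ₜ[ℂ] ((Real.cos θ : ℂ) • e (0, 0) + (Real.sin θ : ℂ) • e (1, 1)) := by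
  have hθc : Real.cos θ ≠ 0 := by
    have h2' : θ < Real.pi / 2 := lt_of_le_of_lt hθ.2 (by linarith [Real.pi_pos])
    exact (Real.cos_pos_of_mem_Ioo ⟨by linarith [Real.pi_pos, hθ.1], h2'⟩).ne'
  set c : ℂ := (Real.cos θ : ℂ) with hc
  set s : ℂ := (Real.sin θ : ℂ) with hs
  have hc0 : c ≠ 0 := Complex.ofReal_ne_zero.mpr hθc
  have hZ : ZB ψ = ZA ψ := by
    rw [ContinuousLinearMap.sub_apply, sub_eq_zero] at h1; exact h1.symm
  have hZAA : ZA (ZA ψ) = ψ := by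
    have := congrArg (fun f => f ψ) hZA2
    simpa [ContinuousLinearMap.mul_apply] using this
  have hXAA : ∀ v, XA (XA v) = v := by
    intro v
    have := congrArg (fun f => f v) hXA2
    simpa [ContinuousLinearMap.mul_apply] using this
  set p : H := ψ + ZA ψ with hp
  set w : H := XA (XB (ψ - ZA ψ)) with hw
  -- h2 rewritten
  have h2' : s • (XA ((1 + ZB) ψ)) = c • (XB ((1 - ZA) ψ)) := by
    rw [ContinuousLinearMap.sub_apply, sub_eq_zero] at h2
    simpa [ContinuousLinearMap.mul_apply] using h2
  have hpB : (1 + ZB) ψ = p := by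
    simp [ContinuousLinearMap.add_apply, hZ, hp]
  have hmA : (1 - ZA) ψ = ψ - ZA ψ := by
    simp [ContinuousLinearMap.sub_apply]
  have key : c • w = s • p := by
    have := congrArg XA h2'
    rw [map_smul, map_smul, hXAA] at this
    rw [hpB, hmA] at this
    exact this.symm
  have hwval : w = (c⁻¹ * s) • p := by
    calc w = c⁻¹ • (c • w) := by rw [smul_smul, inv_mul_cancel₀ hc0, one_smul]
      _ = (c⁻¹ * s) • p := by rw [key, smul_smul]
  have e1 : ((1 + ZA) * (1 + ZB)) ψ = (2 : ℂ) • p := by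
    simp only [ContinuousLinearMap.mul_apply, ContinuousLinearMap.add_apply,
      ContinuousLinearMap.one_apply, map_add, hZ, hZAA, hp]
    module
  have e2 : (XB * ((1 + ZA) * (1 - ZB))) ψ = 0 := by
    have : ((1 + ZA) * (1 - ZB)) ψ = 0 := by
      simp only [ContinuousLinearMap.mul_apply, ContinuousLinearMap.sub_apply,
        ContinuousLinearMap.add_apply, ContinuousLinearMap.one_apply, map_sub, hZ, hZAA]
      abel
    rw [ContinuousLinearMap.mul_apply, this, map_zero]
  have e3 : (XA * ((1 - ZA) * (1 + ZB))) ψ = 0 := by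
    have : ((1 - ZA) * (1 + ZB)) ψ = 0 := by
      simp only [ContinuousLinearMap.mul_apply, ContinuousLinearMap.sub_apply,
        ContinuousLinearMap.add_apply, ContinuousLinearMap.one_apply, map_add, hZ, hZAA]
      abel
    rw [ContinuousLinearMap.mul_apply, this, map_zero]
  have e4 : (XA * XB * ((1 - ZA) * (1 - ZB))) ψ = (2 : ℂ) • w := by
    have hin : ((1 - ZA) * (1 - ZB)) ψ = (2 : ℂ) • (ψ - ZA ψ) := by
      simp only [ContinuousLinearMap.mul_apply, ContinuousLinearMap.sub_apply,
        ContinuousLinearMap.one_apply, map_sub, hZ, hZAA]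
      module
    rw [ContinuousLinearMap.mul_apply, ContinuousLinearMap.mul_apply, hin,
      map_smul, map_smul, hw]
  have hjunk' : junk = (c⁻¹ * 2⁻¹) • p := by
    rw [hjunk]
    have : ((1 + ZA) ψ) = p := by simp [ContinuousLinearMap.add_apply, hp]
    rw [this]
    congr 1
    rw [Complex.ofReal_mul, mul_inv, Complex.ofReal_ofNat]
    ring
  rw [e1, e2, e3, e4, hjunk', hwval]
  rw [TensorProduct.tmul_add]
  simp only [TensorProduct.smul_tmul', TensorProduct.tmul_smul, TensorProduct.zero_tmul,
    smul_smul]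
  rw [show c * (c⁻¹ * 2⁻¹) = 2⁻¹ from by field_simp,
    show s * (c⁻¹ * 2⁻¹) = 4⁻¹ * (2 * (c⁻¹ * s)) from by ring]
  simp only [smul_add, smul_zero, TensorProduct.smul_tmul', smul_smul]
  norm_num
end

section
/- Suppose |ψ⟩ satisfies P|ψ⟩ = 0 for each of the four squares appearing in the two SOS decompositions of η·1 − B_{[α,β]}, namely (η·1 − B_{[α,β]})|ψ⟩ = 0, (βA₁ − S₀)|ψ⟩ = 0, (2A₀ − (η/(2α))(B₀+B₁) + (β/2)S₁)|ψ⟩ = 0, and (2A₁ − (η/2)(B₀−B₁) + (β/2)S₂)|ψ⟩ = 0, with Z_A = A₀, X_A = A₁, Z_B = (B₀+B₁)/(2cosμ), X_B = (B₀−B₁)/(2sinμ), where cosμ = α/√(α²+sin²2θ), sinμ = sin2θ/√(α²+sin²2θ), β = 2cos2θ/√(α²+sin²2θ), η = 2(α²+1)/√(α²+sin²2θ). Then (Z_A − Z_B)|ψ⟩ = 0 and (sinθ·X_A(1+Z_B) − cosθ·X_B(1−Z_A))|ψ⟩ = 0. -/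
/-!
Write `γ = cos 2θ`, `σ = sin 2θ`, `s = √(α² + σ²)`. In the variables `Z_A, X_A, Z_B, X_B` the
rescaled SOS polynomials `Qᵢ` (below `sosᵢ`) have coefficients polynomial in `α, γ, σ`. Because
`B₀, B₁` are involutions, `Z_B` and `X_B` anticommute and satisfy `α² Z_B² + σ² X_B² = s²`; with
these relations
`γ Z_A Q₃ - Z_B Q₁ - σ X_B Q₂ - γ (1 + γ Z_A) Q₁ = (α² + 1) σ² (Z_A - Z_B)`,
and, using `1 - γ = 2 sin² θ` and `σ = 2 sin θ cos θ`,
`(γ - α² - 1) Q₂ + Q₄ = 2 (α² + 1) sin θ (sin θ X_A(1 + Z_B) - cos θ X_B(1 - Z_A))`.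
Left multiples of operators annihilating `ψ` annihilate `ψ`.
-/

namespace TiltedCHSH

section Identities

variable {𝕜 R : Type*} [CommRing 𝕜] [Ring R] [Algebra 𝕜 R]

/- `sosᵢ a γ σ Z_A X_A Z_B X_B`, at `a = α`, is the `i`-th SOS polynomial `Pᵢ` multiplied by `s/2`
(`i = 1, 2`) or by `s²/2` (`i = 3, 4`), with `s²` written as `α² + σ²`. -/
def sos₁ (a γ σ : 𝕜) (zA xA zB xB : R) : R :=
  (a ^ 2 + 1) • 1 - γ • zA - a ^ 2 • (zA * zB) - σ • (xA * xB)

def sos₂ (γ σ : 𝕜) (zA xA zB xB : R) : R :=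
  γ • xA - σ • (zA * xB) - xA * zB

def sos₃ (a γ σ : 𝕜) (zA xA zB xB : R) : R :=
  (a ^ 2 + σ ^ 2) • zA - (a ^ 2 + 1) • zB + γ • (zA * zB) - (γ * σ) • (xA * xB)

def sos₄ (a γ σ : 𝕜) (zA xA zB xB : R) : R :=
  (a ^ 2 + σ ^ 2) • xA - ((a ^ 2 + 1) * σ) • xB + (γ * σ) • (zA * xB) - (γ * a ^ 2) • (xA * zB)

variable {a γ σ : 𝕜} {zA xA zB xB : R}

theorem sos_combination_eq_smul_zA_sub_zB (hzA : zA * zA = 1) (hzBzA : Commute zB zA)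
    (hxBzA : Commute xB zA) (hzBxA : Commute zB xA) (hxBxA : Commute xB xA)
    (hanti : zB * xB + xB * zB = 0)
    (hsq : a ^ 2 • (zB * zB) + σ ^ 2 • (xB * xB) = (a ^ 2 + σ ^ 2) • 1)
    (hγσ : γ ^ 2 + σ ^ 2 = 1) :
    γ • (zA * sos₃ a γ σ zA xA zB xB) - zB * sos₁ a γ σ zA xA zB xB
      - σ • (xB * sos₂ γ σ zA xA zB xB) - γ • ((1 + γ • zA) * sos₁ a γ σ zA xA zB xB)
      = ((a ^ 2 + 1) * σ ^ 2) • (zA - zB) := by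
  have hquad : zB * sos₁ a γ σ zA xA zB xB + σ • (xB * sos₂ γ σ zA xA zB xB)
      = (a ^ 2 + 1) • zB - γ • (zA * zB) + (σ * γ) • (xA * xB)
        - zA * (a ^ 2 • (zB * zB) + σ ^ 2 • (xB * xB)) - σ • (xA * (zB * xB + xB * zB)) := by
    simp only [sos₁, sos₂, mul_add, mul_sub, mul_smul_comm, mul_one, ← mul_assoc, hzBzA.eq,
      hxBzA.eq, hzBxA.eq, hxBxA.eq]
    module
  rw [sub_sub _ (zB * _), hquad, hsq, hanti]
  simp only [sos₁, sos₃, mul_add, add_mul, mul_sub, smul_mul_assoc, mul_smul_comm,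
    one_mul, mul_one, ← mul_assoc, hzA, mul_zero, smul_zero]
  match_scalars <;> grind

theorem sos_combination_eq_smul_xA_mul_sub (hxBzA : Commute xB zA) (hγσ : γ ^ 2 + σ ^ 2 = 1) :
    (γ - a ^ 2 - 1) • sos₂ γ σ zA xA zB xB + sos₄ a γ σ zA xA zB xB
      = (a ^ 2 + 1) • ((1 - γ) • (xA * (1 + zB)) - σ • (xB * (1 - zA))) := by
  simp only [sos₂, sos₄, mul_add, mul_sub, mul_one, hxBzA.eq]
  match_scalars <;> grind

theorem mul_add_mul_eq_zero_of_smul {b₀ b₁ : R} {c d : 𝕜} (h₀ : b₀ * b₀ = 1) (h₁ : b₁ * b₁ = 1)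
    (hzB : zB = c • (b₀ + b₁)) (hxB : xB = d • (b₀ - b₁)) : zB * xB + xB * zB = 0 := by
  simp only [hzB, hxB, smul_mul_smul_comm, add_mul, mul_add, sub_mul, mul_sub, h₀, h₁]
  module

end Identities

section Normalization

variable {𝕜 R : Type*} [Field 𝕜] [Ring R] [Algebra 𝕜 R]
  {a γ σ s β η : 𝕜} {zA xA zB xB b₀ b₁ : R}

theorem sq_smul_mul_self_add_sq_smul_mul_self [NeZero (2 : 𝕜)] (h₀ : b₀ * b₀ = 1)
    (h₁ : b₁ * b₁ = 1) (ha : a ≠ 0) (hσ : σ ≠ 0)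
    (hzB : zB = (2 * (a / s))⁻¹ • (b₀ + b₁)) (hxB : xB = (2 * (σ / s))⁻¹ • (b₀ - b₁)) :
    a ^ 2 • (zB * zB) + σ ^ 2 • (xB * xB) = s ^ 2 • 1 := by
  simp only [hzB, hxB, smul_mul_smul_comm, add_mul, mul_add, sub_mul, mul_sub, h₀, h₁]
  match_scalars <;> field_simp <;> ring

theorem sub_bell_eq_smul_sos₁ (hu : b₀ + b₁ = (2 * (a / s)) • zB)
    (hv : b₀ - b₁ = (2 * (σ / s)) • xB) (hβ : β = 2 * γ / s) (hη : η = 2 * (a ^ 2 + 1) / s) :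
    η • 1 - (β • zA + a • (zA * b₀ + zA * b₁) + xA * b₀ - xA * b₁)
      = (2 / s) • sos₁ a γ σ zA xA zB xB := by
  rw [add_sub_assoc, ← mul_add, ← mul_sub, hu, hv, hβ, hη]
  simp only [sos₁, mul_smul_comm, smul_sub, smul_smul]
  module

theorem sub_eq_smul_sos₂ (ha : a ≠ 0) (hu : b₀ + b₁ = (2 * (a / s)) • zB)
    (hv : b₀ - b₁ = (2 * (σ / s)) • xB) (hβ : β = 2 * γ / s) :
    β • xA - (zA * (b₀ - b₁) + a⁻¹ • (xA * (b₀ + b₁))) = (2 / s) • sos₂ γ σ zA xA zB xB := by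
  rw [hu, hv, hβ]
  simp only [sos₂, mul_smul_comm, smul_sub, smul_smul]
  match_scalars <;> field_simp

theorem sub_add_eq_smul_sos₃ [NeZero (2 : 𝕜)] (ha : a ≠ 0) (hs : s ≠ 0)
    (hs2 : s ^ 2 = a ^ 2 + σ ^ 2) (hu : b₀ + b₁ = (2 * (a / s)) • zB)
    (hv : b₀ - b₁ = (2 * (σ / s)) • xB)
    (hβ : β = 2 * γ / s) (hη : η = 2 * (a ^ 2 + 1) / s) :
    (2 : 𝕜) • zA - (η / (2 * a)) • (b₀ + b₁) + (β / 2) • (a⁻¹ • (zA * (b₀ + b₁)) - xA * (b₀ - b₁))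
      = (2 / s ^ 2) • sos₃ a γ σ zA xA zB xB := by
  rw [hu, hv, hβ, hη]
  simp only [sos₃, mul_smul_comm, smul_sub, smul_smul, ← hs2]
  match_scalars <;> field_simp

theorem sub_add_eq_smul_sos₄ [NeZero (2 : 𝕜)] (hs : s ≠ 0) (hs2 : s ^ 2 = a ^ 2 + σ ^ 2)
    (hu : b₀ + b₁ = (2 * (a / s)) • zB) (hv : b₀ - b₁ = (2 * (σ / s)) • xB)
    (hβ : β = 2 * γ / s) (hη : η = 2 * (a ^ 2 + 1) / s) :
    (2 : 𝕜) • xA - (η / 2) • (b₀ - b₁) + (β / 2) • (zA * (b₀ - b₁) - a • (xA * (b₀ + b₁)))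
      = (2 / s ^ 2) • sos₄ a γ σ zA xA zB xB := by
  rw [hu, hv, hβ, hη]
  simp only [sos₄, mul_smul_comm, smul_sub, smul_smul, ← hs2]
  match_scalars <;> field_simp

end Normalization

section Action

theorem algebra_smul_smul_eq_zero {𝕜 R M : Type*} [CommSemiring 𝕜] [Semiring R] [Algebra 𝕜 R]
    [AddCommMonoid M] [Module R M] {ψ : M} {T : R} (c : 𝕜) (h : T • ψ = 0) : (c • T) • ψ = 0 := by
  rw [← smul_one_mul c T, mul_smul, h, smul_zero]

variable {𝕜 R M : Type*} [Field 𝕜] [Ring R] [Algebra 𝕜 R] [AddCommGroup M] [Module R M] {ψ : M}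

theorem smul_eq_zero_of_algebra_smul_smul_eq_zero {c : 𝕜} {T : R} (hc : c ≠ 0)
    (h : (c • T) • ψ = 0) : T • ψ = 0 := by
  simpa [smul_smul, inv_mul_cancel₀ hc] using algebra_smul_smul_eq_zero c⁻¹ h

variable {a γ σ s : 𝕜} {zA xA zB xB b₀ b₁ : R}

theorem sub_smul_eq_zero_of_sos [NeZero (2 : 𝕜)] (hzA : zA * zA = 1) (hb₀ : b₀ * b₀ = 1)
    (hb₁ : b₁ * b₁ = 1) (hzA₀ : Commute zA b₀) (hzA₁ : Commute zA b₁) (hxA₀ : Commute xA b₀)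
    (hxA₁ : Commute xA b₁) (ha : a ≠ 0) (hσ : σ ≠ 0) (ha1 : a ^ 2 + 1 ≠ 0)
    (hs2 : s ^ 2 = a ^ 2 + σ ^ 2) (hγσ : γ ^ 2 + σ ^ 2 = 1)
    (hzB : zB = (2 * (a / s))⁻¹ • (b₀ + b₁)) (hxB : xB = (2 * (σ / s))⁻¹ • (b₀ - b₁))
    (h₁ : sos₁ a γ σ zA xA zB xB • ψ = 0) (h₂ : sos₂ γ σ zA xA zB xB • ψ = 0)
    (h₃ : sos₃ a γ σ zA xA zB xB • ψ = 0) :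
    (zA - zB) • ψ = 0 := by
  have hcomb := congrArg (· • ψ) <| sos_combination_eq_smul_zA_sub_zB hzA
    (hzB ▸ ((hzA₀.add_right hzA₁).smul_right _).symm)
    (hxB ▸ ((hzA₀.sub_right hzA₁).smul_right _).symm)
    (hzB ▸ ((hxA₀.add_right hxA₁).smul_right _).symm)
    (hxB ▸ ((hxA₀.sub_right hxA₁).smul_right _).symm)
    (mul_add_mul_eq_zero_of_smul hb₀ hb₁ hzB hxB)
    (hs2 ▸ sq_smul_mul_self_add_sq_smul_mul_self hb₀ hb₁ ha hσ hzB hxB) hγσ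
  simp only [← smul_mul_assoc, sub_smul, mul_smul, h₁, h₂, h₃, smul_zero, sub_zero] at hcomb
  rw [smul_smul] at hcomb
  exact smul_eq_zero_of_algebra_smul_smul_eq_zero (mul_ne_zero ha1 (pow_ne_zero 2 hσ)) hcomb.symm

theorem smul_sub_smul_smul_eq_zero_of_sos (hzA₀ : Commute zA b₀) (hzA₁ : Commute zA b₁)
    (ha1 : a ^ 2 + 1 ≠ 0) (hγσ : γ ^ 2 + σ ^ 2 = 1) (hxB : xB = (2 * (σ / s))⁻¹ • (b₀ - b₁))
    (h₂ : sos₂ γ σ zA xA zB xB • ψ = 0) (h₄ : sos₄ a γ σ zA xA zB xB • ψ = 0) :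
    ((1 - γ) • (xA * (1 + zB)) - σ • (xB * (1 - zA))) • ψ = 0 := by
  have hcomb := congrArg (· • ψ) <|
    sos_combination_eq_smul_xA_mul_sub (a := a) (xA := xA) (zB := zB)
      (hxB ▸ ((hzA₀.sub_right hzA₁).smul_right _).symm) hγσ
  rw [add_smul, algebra_smul_smul_eq_zero _ h₂, h₄, add_zero] at hcomb
  exact smul_eq_zero_of_algebra_smul_smul_eq_zero ha1 hcomb.symm

end Action

end TiltedCHSH

open TiltedCHSH

theorem stmt_10_general {H : Type*} [NormedAddCommGroup H] [InnerProductSpace ℂ H]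
    (A₀ A₁ B₀ B₁ : H →L[ℂ] H)
    (hA₀2 : A₀ * A₀ = 1) (hB₀2 : B₀ * B₀ = 1) (hB₁2 : B₁ * B₁ = 1)
    (hc00 : A₀ * B₀ = B₀ * A₀) (hc01 : A₀ * B₁ = B₁ * A₀)
    (hc10 : A₁ * B₀ = B₀ * A₁) (hc11 : A₁ * B₁ = B₁ * A₁)
    (α θ : ℝ) (hα : 1 ≤ α) (hθ : θ ∈ Set.Ioc 0 (Real.pi / 4))
    (β η cμ sμ : ℝ)
    (hβ : β = 2 * Real.cos (2 * θ) / Real.sqrt (α ^ 2 + Real.sin (2 * θ) ^ 2))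
    (hη : η = 2 * (α ^ 2 + 1) / Real.sqrt (α ^ 2 + Real.sin (2 * θ) ^ 2))
    (hcμ : cμ = α / Real.sqrt (α ^ 2 + Real.sin (2 * θ) ^ 2))
    (hsμ : sμ = Real.sin (2 * θ) / Real.sqrt (α ^ 2 + Real.sin (2 * θ) ^ 2))
    (Bop S₀ S₁ S₂ ZA XA ZB XB : H →L[ℂ] H)
    (hBop : Bop = (β : ℂ) • A₀ + (α : ℂ) • (A₀ * B₀ + A₀ * B₁) + A₁ * B₀ - A₁ * B₁)
    (hS₀ : S₀ = A₀ * (B₀ - B₁) + (α⁻¹ : ℂ) • (A₁ * (B₀ + B₁)))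
    (hS₁ : S₁ = (α⁻¹ : ℂ) • (A₀ * (B₀ + B₁)) - A₁ * (B₀ - B₁))
    (hS₂ : S₂ = A₀ * (B₀ - B₁) - (α : ℂ) • (A₁ * (B₀ + B₁)))
    (hZA : ZA = A₀) (hXA : XA = A₁)
    (hZB : ZB = ((2 * cμ : ℝ)⁻¹ : ℂ) • (B₀ + B₁))
    (hXB : XB = ((2 * sμ : ℝ)⁻¹ : ℂ) • (B₀ - B₁))
    (ψ : H)
    (hP1 : ((η : ℂ) • (1 : H →L[ℂ] H) - Bop) ψ = 0)
    (hP2 : ((β : ℂ) • A₁ - S₀) ψ = 0)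
    (hP3 : ((2 : ℂ) • A₀ - ((η / (2 * α) : ℝ) : ℂ) • (B₀ + B₁) + ((β / 2 : ℝ) : ℂ) • S₁) ψ = 0)
    (hP4 : ((2 : ℂ) • A₁ - ((η / 2 : ℝ) : ℂ) • (B₀ - B₁) + ((β / 2 : ℝ) : ℂ) • S₂) ψ = 0) :
    (ZA - ZB) ψ = 0 ∧
    ((Real.sin θ : ℂ) • (XA * (1 + ZB)) - (Real.cos θ : ℂ) • (XB * (1 - ZA))) ψ = 0 := by
  obtain ⟨hθ0, hθ4⟩ := hθ
  simp only [← Complex.ofReal_inv, ← Complex.ofReal_ofNat, Complex.coe_smul]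
    at hBop hS₀ hS₁ hS₂ hZB hXB hP1 hP2 hP3 hP4 ⊢
  subst hZA hXA hcμ hsμ
  set σ := Real.sin (2 * θ) with hσ_def
  set s := √(α ^ 2 + σ ^ 2)
  have ha : α ≠ 0 := by positivity
  have hsθ : 0 < Real.sin θ := Real.sin_pos_of_pos_of_lt_pi hθ0 (by linarith [Real.pi_pos])
  have hσ : σ ≠ 0 := (Real.sin_pos_of_pos_of_lt_pi (by linarith) (by linarith [Real.pi_pos])).ne'
  have hs : s ≠ 0 := by positivity
  have hs2 : s ^ 2 = α ^ 2 + σ ^ 2 := Real.sq_sqrt (by positivity)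
  have hγσ : Real.cos (2 * θ) ^ 2 + σ ^ 2 = 1 := by rw [add_comm]; exact Real.sin_sq_add_cos_sq _
  have hu : B₀ + B₁ = (2 * (α / s)) • ZB := (inv_smul_eq_iff₀ (by positivity)).1 hZB.symm
  have hv : B₀ - B₁ = (2 * (σ / s)) • XB := (inv_smul_eq_iff₀ (by positivity)).1 hXB.symm
  rw [hBop, sub_bell_eq_smul_sos₁ hu hv hβ hη, ← ContinuousLinearMap.smul_def] at hP1
  rw [hS₀, sub_eq_smul_sos₂ ha hu hv hβ, ← ContinuousLinearMap.smul_def] at hP2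
  rw [hS₁, sub_add_eq_smul_sos₃ ha hs hs2 hu hv hβ hη, ← ContinuousLinearMap.smul_def] at hP3
  rw [hS₂, sub_add_eq_smul_sos₄ hs hs2 hu hv hβ hη, ← ContinuousLinearMap.smul_def] at hP4
  have h₁ := smul_eq_zero_of_algebra_smul_smul_eq_zero (c := 2 / s) (by positivity) hP1
  have h₂ := smul_eq_zero_of_algebra_smul_smul_eq_zero (c := 2 / s) (by positivity) hP2
  have h₃ := smul_eq_zero_of_algebra_smul_smul_eq_zero (c := 2 / s ^ 2) (by positivity) hP3
  have h₄ := smul_eq_zero_of_algebra_smul_smul_eq_zero (c := 2 / s ^ 2) (by positivity) hP4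
  refine ⟨sub_smul_eq_zero_of_sos hA₀2 hB₀2 hB₁2 hc00 hc01 hc10 hc11 ha hσ (by positivity) hs2 hγσ
    hZB hXB h₁ h₂ h₃, ?_⟩
  have hhalf : (1 - Real.cos (2 * θ)) • (XA * (1 + ZB)) - σ • (XB * (1 - ZA))
      = (2 * Real.sin θ) • (Real.sin θ • (XA * (1 + ZB)) - Real.cos θ • (XB * (1 - ZA))) := by
    rw [hσ_def, Real.cos_two_mul, Real.cos_sq', Real.sin_two_mul]
    module
  have h := smul_sub_smul_smul_eq_zero_of_sos hc00 hc01 (by positivity) hγσ hXB h₂ h₄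
  exact smul_eq_zero_of_algebra_smul_smul_eq_zero (by positivity) (hhalf ▸ h)

theorem stmt_10 {H : Type*} [NormedAddCommGroup H] [InnerProductSpace ℂ H] [CompleteSpace H]
    (A₀ A₁ B₀ B₁ : H →L[ℂ] H)
    (hA₀ : IsSelfAdjoint A₀) (hA₁ : IsSelfAdjoint A₁)
    (hB₀ : IsSelfAdjoint B₀) (hB₁ : IsSelfAdjoint B₁)
    (hA₀2 : A₀ * A₀ = 1) (hA₁2 : A₁ * A₁ = 1) (hB₀2 : B₀ * B₀ = 1) (hB₁2 : B₁ * B₁ = 1)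
    (hc00 : A₀ * B₀ = B₀ * A₀) (hc01 : A₀ * B₁ = B₁ * A₀)
    (hc10 : A₁ * B₀ = B₀ * A₁) (hc11 : A₁ * B₁ = B₁ * A₁)
    (α θ : ℝ) (hα : 1 ≤ α) (hθ : θ ∈ Set.Ioc 0 (Real.pi / 4))
    (β η cμ sμ : ℝ)
    (hβ : β = 2 * Real.cos (2 * θ) / Real.sqrt (α ^ 2 + Real.sin (2 * θ) ^ 2))
    (hη : η = 2 * (α ^ 2 + 1) / Real.sqrt (α ^ 2 + Real.sin (2 * θ) ^ 2))
    (hcμ : cμ = α / Real.sqrt (α ^ 2 + Real.sin (2 * θ) ^ 2))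
    (hsμ : sμ = Real.sin (2 * θ) / Real.sqrt (α ^ 2 + Real.sin (2 * θ) ^ 2))
    (Bop S₀ S₁ S₂ ZA XA ZB XB : H →L[ℂ] H)
    (hBop : Bop = (β : ℂ) • A₀ + (α : ℂ) • (A₀ * B₀ + A₀ * B₁) + A₁ * B₀ - A₁ * B₁)
    (hS₀ : S₀ = A₀ * (B₀ - B₁) + (α⁻¹ : ℂ) • (A₁ * (B₀ + B₁)))
    (hS₁ : S₁ = (α⁻¹ : ℂ) • (A₀ * (B₀ + B₁)) - A₁ * (B₀ - B₁))
    (hS₂ : S₂ = A₀ * (B₀ - B₁) - (α : ℂ) • (A₁ * (B₀ + B₁)))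
    (hZA : ZA = A₀) (hXA : XA = A₁)
    (hZB : ZB = ((2 * cμ : ℝ)⁻¹ : ℂ) • (B₀ + B₁))
    (hXB : XB = ((2 * sμ : ℝ)⁻¹ : ℂ) • (B₀ - B₁))
    (ψ : H)
    (hP1 : ((η : ℂ) • (1 : H →L[ℂ] H) - Bop) ψ = 0)
    (hP2 : ((β : ℂ) • A₁ - S₀) ψ = 0)
    (hP3 : ((2 : ℂ) • A₀ - ((η / (2 * α) : ℝ) : ℂ) • (B₀ + B₁) + ((β / 2 : ℝ) : ℂ) • S₁) ψ = 0)
    (hP4 : ((2 : ℂ) • A₁ - ((η / 2 : ℝ) : ℂ) • (B₀ - B₁) + ((β / 2 : ℝ) : ℂ) • S₂) ψ = 0) :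
    (ZA - ZB) ψ = 0 ∧
    ((Real.sin θ : ℂ) • (XA * (1 + ZB)) - (Real.cos θ : ℂ) • (XB * (1 - ZA))) ψ = 0 :=
  stmt_10_general A₀ A₁ B₀ B₁ hA₀2 hB₀2 hB₁2 hc00 hc01 hc10 hc11 α θ hα hθ β η cμ sμ hβ hη hcμ hsμ
    Bop S₀ S₁ S₂ ZA XA ZB XB hBop hS₀ hS₁ hS₂ hZA hXA hZB hXB ψ hP1 hP2 hP3 hP4
end

section
/- For α ≥ 1 and 0 ≤ β < 2/α, setting the quantum bound η = √((4+β²)(1+α²)) and classical bound C = 2α + β, the gap η − C is strictly decreasing in β on [0, 2/α) for fixed α, and η − C > 0 throughout, vanishing as β → 2/α. -/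
open Real Filter

theorem stmt_15 (α : ℝ) (hα : 1 ≤ α) :
    StrictAntiOn (fun β : ℝ => Real.sqrt ((4 + β ^ 2) * (1 + α ^ 2)) - (2 * α + β))
      (Set.Ico 0 (2 / α)) ∧
    (∀ β ∈ Set.Ico (0 : ℝ) (2 / α),
      0 < Real.sqrt ((4 + β ^ 2) * (1 + α ^ 2)) - (2 * α + β)) ∧
    Filter.Tendsto (fun β : ℝ => Real.sqrt ((4 + β ^ 2) * (1 + α ^ 2)) - (2 * α + β))
      (nhdsWithin (2 / α) (Set.Iio (2 / α))) (nhds 0) := by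
  have hα0 : 0 < α := lt_of_lt_of_le one_pos hα
  have key : ∀ β : ℝ, 0 ≤ β → α * β < 2 →
      β * (1 + α ^ 2) < Real.sqrt ((4 + β ^ 2) * (1 + α ^ 2)) := by
    intro β hβ h2
    rw [show β * (1 + α ^ 2) = Real.sqrt ((β * (1 + α ^ 2)) ^ 2) from
      (Real.sqrt_sq (by positivity)).symm]
    apply Real.sqrt_lt_sqrt (by positivity)
    have h4 : α ^ 2 * β ^ 2 < 4 := by nlinarith [mul_pos (sub_pos.mpr h2) (show (0:ℝ) < 2 + α * β by positivity)]
    nlinarith [mul_pos (show (0:ℝ) < 1 + α ^ 2 by positivity) (show (0:ℝ) < 4 - α ^ 2 * β ^ 2 by linarith)]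
  refine ⟨?_, ?_, ?_⟩
  · intro b1 hb1 b2 hb2 hlt
    obtain ⟨hb10, hb1u⟩ := hb1
    obtain ⟨hb20, hb2u⟩ := hb2
    have h1m : α * b1 < 2 := by rw [lt_div_iff₀ hα0] at hb1u; linarith
    have h2m : α * b2 < 2 := by rw [lt_div_iff₀ hα0] at hb2u; linarith
    have h1 := key b1 hb10 h1m
    have h2 := key b2 hb20 h2m
    set r1 := Real.sqrt ((4 + b1 ^ 2) * (1 + α ^ 2)) with hr1
    set r2 := Real.sqrt ((4 + b2 ^ 2) * (1 + α ^ 2)) with hr2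
    have hr1sq : r1 ^ 2 = (4 + b1 ^ 2) * (1 + α ^ 2) := Real.sq_sqrt (by positivity)
    have hr2sq : r2 ^ 2 = (4 + b2 ^ 2) * (1 + α ^ 2) := Real.sq_sqrt (by positivity)
    have hsumpos : 0 < r1 + r2 := by nlinarith
    have hsum : (b1 + b2) * (1 + α ^ 2) < r1 + r2 := by nlinarith
    have hfac : (r2 - r1) * (r1 + r2) = (b2 - b1) * ((b1 + b2) * (1 + α ^ 2)) := by
      linear_combination hr2sq - hr1sq
    have hmul : (r2 - r1) * (r1 + r2) < (b2 - b1) * (r1 + r2) := by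
      rw [hfac]
      exact mul_lt_mul_of_pos_left hsum (sub_pos.mpr hlt)
    have := lt_of_mul_lt_mul_right hmul hsumpos.le
    simp only []
    linarith
  · intro β hβ
    obtain ⟨hβ0, hβu⟩ := hβ
    have h2m : α * β < 2 := by rw [lt_div_iff₀ hα0] at hβu; linarith
    have h : 2 * α + β < Real.sqrt ((4 + β ^ 2) * (1 + α ^ 2)) := by
      rw [show 2 * α + β = Real.sqrt ((2 * α + β) ^ 2) from
        (Real.sqrt_sq (by positivity)).symm]
      apply Real.sqrt_lt_sqrt (by positivity)
      nlinarith [mul_pos (sub_pos.mpr h2m) (sub_pos.mpr h2m)]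
    linarith
  · have hcont : Continuous fun β : ℝ =>
        Real.sqrt ((4 + β ^ 2) * (1 + α ^ 2)) - (2 * α + β) := by
      apply Continuous.sub
      · exact (continuous_const.add (continuous_pow 2)).mul continuous_const |>.sqrt
      · exact continuous_const.add continuous_id
    have hval : Real.sqrt ((4 + (2 / α) ^ 2) * (1 + α ^ 2)) - (2 * α + 2 / α) = 0 := by
      have he : (4 + (2 / α) ^ 2) * (1 + α ^ 2) = (2 * α + 2 / α) ^ 2 := by
        field_simp
        ring
      rw [he, Real.sqrt_sq (by positivity)]
      ring
    have := (hcont.tendsto (2 / α)).mono_left (nhdsWithin_le_nhds (s := Set.Iio (2 / α)))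
    rwa [hval] at this
end
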